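/- Let X be a real random variable with characteristic function Φ_X(ξ) = E[e^{iξX}], and let 0 < p < 2. Then E[|X|^p] = c_p · ∫_ℝ (1 - Re Φ_X(ξ)) / |ξ|^{p+1} dξ, where c_p = (∫_ℝ (1 - cos u)/|u|^{p+1} du)^{-1}, with both sides possibly equal to +∞. -/

import Mathlib

/-!
Substituting `u = ξ x` gives `∫ (1 - cos (ξ x)) / |ξ|^(p+1) dξ = |x|^p ∫ (1 - cos u) / |u|^(p+1) du`,
where the last integral converges at `0` because `1 - cos u ≤ u²` and `p < 2`, and at infinity
because `p > 0`. Since `1 - Re Φ_X(ξ) = E[1 - cos (ξ X)]`, integrating this identity against the law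
of `X` and exchanging the two integrals of the nonnegative integrand (Tonelli) gives the formula.
-/

open MeasureTheory Real Set

theorem MeasureTheory.Integrable.of_integrableOn_Ioi_of_even {E : Type*} [NormedAddCommGroup E]
    {f : ℝ → E} (heven : f.Even) (hf : IntegrableOn f (Ioi 0)) : Integrable f := by
  have hIic : IntegrableOn f (Iic 0) := by
    have hneg : MeasurableEmbedding fun x : ℝ => -x := (Homeomorph.neg ℝ).measurableEmbedding
    rw [← Measure.map_neg_eq_self (volume : Measure ℝ), hneg.integrableOn_map_iff]
    simp only [neg_preimage, neg_Iic, neg_zero, Function.comp_def, heven _]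
    exact (integrableOn_Ici_iff_integrableOn_Ioi).mpr hf
  rw [← integrableOn_univ, ← Iic_union_Ioi (a := (0 : ℝ))]
  exact hIic.union hf

lemma integrable_cos_mul {μ : Measure ℝ} [IsFiniteMeasure μ] (ξ : ℝ) :
    Integrable (fun x => cos (ξ * x)) μ :=
  .of_bound (by fun_prop) 1 (.of_forall fun x => by simpa using abs_cos_le_one _)

lemma re_charFun_eq_integral_cos {μ : Measure ℝ} [IsFiniteMeasure μ] (ξ : ℝ) :
    (charFun μ ξ).re = ∫ x, cos (ξ * x) ∂μ := by
  rw [charFun_apply_real, ← RCLike.re_to_complex, ← integral_re (.of_bound (by fun_prop) 1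
    (.of_forall fun x => by simp [← Complex.ofReal_mul, Complex.norm_exp_ofReal_mul_I]))]
  simp_rw [RCLike.re_to_complex, ← Complex.ofReal_mul, Complex.exp_ofReal_mul_I_re]

lemma one_sub_re_charFun {μ : Measure ℝ} [IsProbabilityMeasure μ] (ξ : ℝ) :
    1 - (charFun μ ξ).re = ∫ x, (1 - cos (ξ * x)) ∂μ := by
  rw [re_charFun_eq_integral_cos, integral_sub (integrable_const 1) (integrable_cos_mul ξ),
    integral_const, probReal_univ, one_smul]

namespace MomentFormula

noncomputable def kernel (p u : ℝ) : ℝ := (1 - cos u) / |u| ^ (p + 1)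

lemma kernel_nonneg (p u : ℝ) : 0 ≤ kernel p u :=
  div_nonneg (sub_nonneg.mpr (cos_le_one u)) (by positivity)

lemma kernel_even (p : ℝ) : (kernel p).Even := fun u => by simp [kernel]

lemma measurable_kernel (p : ℝ) : Measurable (kernel p) := by
  unfold kernel; fun_prop

lemma kernel_le_rpow {p u : ℝ} (hu : 0 < u) : kernel p u ≤ u ^ (1 - p) := by
  have hcos : 1 - cos u ≤ u ^ (2 : ℝ) := by
    rw [rpow_two]; nlinarith [one_sub_sq_div_two_le_cos (x := u)]
  calc kernel p u ≤ u ^ (2 : ℝ) / u ^ (p + 1) := by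
        rw [kernel, abs_of_pos hu]; gcongr
    _ = u ^ (1 - p) := by rw [← rpow_sub hu]; ring_nf

lemma kernel_le_two_mul_rpow {p u : ℝ} (hu : 0 < u) : kernel p u ≤ 2 * u ^ (-(p + 1)) := by
  rw [kernel, abs_of_pos hu, rpow_neg hu.le, ← div_eq_mul_inv]
  gcongr
  linarith [neg_one_le_cos u]

lemma integrable_kernel {p : ℝ} (hp0 : 0 < p) (hp2 : p < 2) : Integrable (kernel p) := by
  refine .of_integrableOn_Ioi_of_even (kernel_even p) ?_
  rw [← Ioc_union_Ioi_eq_Ioi zero_le_one]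
  refine IntegrableOn.union ?_ ?_
  · refine Integrable.mono'
      (intervalIntegral.intervalIntegrable_rpow' (r := 1 - p) (by linarith)).1
      (measurable_kernel p).aestronglyMeasurable ?_
    filter_upwards [ae_restrict_mem measurableSet_Ioc] with u hu
    rw [norm_of_nonneg (kernel_nonneg p u)]
    exact kernel_le_rpow hu.1
  · refine Integrable.mono'
      ((integrableOn_Ioi_rpow_of_lt (a := -(p + 1)) (by linarith) one_pos).const_mul 2)
      (measurable_kernel p).aestronglyMeasurable ?_
    filter_upwards [ae_restrict_mem measurableSet_Ioi] with u hu
    rw [norm_of_nonneg (kernel_nonneg p u)]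
    exact kernel_le_two_mul_rpow (one_pos.trans hu)

lemma integral_kernel_pos {p : ℝ} (hp0 : 0 < p) (hp2 : p < 2) : 0 < ∫ u, kernel p u := by
  rw [integral_pos_iff_support_of_nonneg (kernel_nonneg p) (integrable_kernel hp0 hp2)]
  have hsupport : Ioo 0 (2 * π) ⊆ Function.support (kernel p) := by
    intro u ⟨hu0, hu⟩
    have hcos : cos u ≠ 1 := fun h =>
      hu0.ne' ((cos_eq_one_iff_of_lt_of_lt (by linarith [pi_pos]) hu).mp h)
    exact (div_pos (sub_pos.mpr ((cos_le_one u).lt_of_ne hcos)) (by positivity)).ne'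
  exact (measure_mono hsupport).trans_lt' (by simp [pi_pos])

lemma one_sub_cos_mul_div_eq (p x ξ : ℝ) :
    (1 - cos (ξ * x)) / |ξ| ^ (p + 1) = |x| ^ (p + 1) * kernel p (ξ * x) := by
  rcases eq_or_ne x 0 with rfl | hx
  · simp [kernel]
  rcases eq_or_ne ξ 0 with rfl | hξ
  · simp [kernel]
  rw [kernel, abs_mul, mul_rpow (abs_nonneg ξ) (abs_nonneg x)]
  field_simp

lemma integrable_one_sub_cos_mul_div {p : ℝ} (hp0 : 0 < p) (hp2 : p < 2) {x : ℝ} (hx : x ≠ 0) :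
    Integrable (fun ξ => (1 - cos (ξ * x)) / |ξ| ^ (p + 1)) := by
  simp_rw [one_sub_cos_mul_div_eq p x]
  exact ((integrable_kernel hp0 hp2).comp_mul_right' hx).const_mul _

lemma integral_one_sub_cos_mul_div (p : ℝ) {x : ℝ} (hx : x ≠ 0) :
    ∫ ξ, (1 - cos (ξ * x)) / |ξ| ^ (p + 1) = |x| ^ p * ∫ u, kernel p u := by
  simp_rw [one_sub_cos_mul_div_eq p x]
  rw [integral_const_mul, Measure.integral_comp_mul_right, smul_eq_mul, ← mul_assoc, abs_inv,
    ← rpow_neg_one, ← rpow_add (abs_pos.mpr hx)]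
  ring_nf

lemma lintegral_one_sub_cos_mul_div {p : ℝ} (hp0 : 0 < p) (hp2 : p < 2) (x : ℝ) :
    ∫⁻ ξ, ENNReal.ofReal ((1 - cos (ξ * x)) / |ξ| ^ (p + 1))
      = ENNReal.ofReal (|x| ^ p * ∫ u, kernel p u) := by
  rcases eq_or_ne x 0 with rfl | hx
  · simp [zero_rpow hp0.ne']
  rw [← integral_one_sub_cos_mul_div p hx,
    ofReal_integral_eq_lintegral_ofReal (integrable_one_sub_cos_mul_div hp0 hp2 hx)]
  exact .of_forall fun ξ => div_nonneg (sub_nonneg.mpr (cos_le_one _)) (by positivity)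

theorem lintegral_ofReal_abs_rpow_eq_charFun {μ : Measure ℝ} [IsProbabilityMeasure μ] {p : ℝ}
    (hp0 : 0 < p) (hp2 : p < 2) :
    ∫⁻ x, ENNReal.ofReal (|x| ^ p) ∂μ
      = ENNReal.ofReal ((∫ u, kernel p u)⁻¹)
        * ∫⁻ ξ, ENNReal.ofReal ((1 - (charFun μ ξ).re) / |ξ| ^ (p + 1)) := by
  have hcharFun (ξ : ℝ) : ENNReal.ofReal ((1 - (charFun μ ξ).re) / |ξ| ^ (p + 1))
      = ∫⁻ x, ENNReal.ofReal ((1 - cos (ξ * x)) / |ξ| ^ (p + 1)) ∂μ := by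
    rw [one_sub_re_charFun, ← integral_div]
    exact ofReal_integral_eq_lintegral_ofReal
      (((integrable_const 1).sub (integrable_cos_mul ξ)).div_const _)
      (.of_forall fun x => div_nonneg (sub_nonneg.mpr (cos_le_one _)) (by positivity))
  have hC := integral_kernel_pos hp0 hp2
  simp_rw [hcharFun]
  rw [lintegral_lintegral_swap (by fun_prop), ← lintegral_const_mul' _ _ ENNReal.ofReal_ne_top]
  simp_rw [lintegral_one_sub_cos_mul_div hp0 hp2, ← ENNReal.ofReal_mul (inv_nonneg.mpr hC.le)]
  congr with x
  field_simp [hC.ne']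

end MomentFormula

/-- Moment formula: for `0 < p < 2`,
`E[|X|^p] = c_p ∫ (1 - Re Φ_X(ξ)) / |ξ|^{p+1} dξ` with
`c_p = (∫ (1 - cos u)/|u|^{p+1} du)⁻¹`, as an equality in `[0,∞]`. -/
theorem stmt_4 {Ω : Type*} [MeasurableSpace Ω] (P : Measure Ω) [IsProbabilityMeasure P]
    (X : Ω → ℝ) (hX : AEMeasurable X P) (p : ℝ) (hp0 : 0 < p) (hp2 : p < 2) :
    ∫⁻ ω, ENNReal.ofReal (|X ω| ^ p) ∂P
      = ENNReal.ofReal ((∫ u : ℝ, (1 - Real.cos u) / |u| ^ (p + 1))⁻¹)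
        * ∫⁻ ξ : ℝ, ENNReal.ofReal
            ((1 - (∫ ω, Complex.exp (Complex.I * ξ * (X ω)) ∂P).re) / |ξ| ^ (p + 1)) := by
  have : IsProbabilityMeasure (P.map X) := Measure.isProbabilityMeasure_map hX
  have hcharFun (ξ : ℝ) :
      ∫ ω, Complex.exp (Complex.I * ξ * (X ω)) ∂P = charFun (P.map X) ξ := by
    rw [charFun_apply_real, integral_map hX (by fun_prop)]
    simp_rw [mul_comm Complex.I, mul_right_comm _ Complex.I]
  rw [← lintegral_map' (f := fun x => ENNReal.ofReal (|x| ^ p)) (by fun_prop) hX]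
  simp_rw [hcharFun]
  exact MomentFormula.lintegral_ofReal_abs_rpow_eq_charFun hp0 hp2
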